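/- Let ⊗ be the tensor product of a closed symmetric monoidal structure on the category Graph of reflexive graphs, and for a, a' ∈ {s, t} write (a,a') for the vertex of I_1 ⊗ I_1 that is the image of the morphism (a,a') : I_0 → I_1 ⊗ I_1. Then the vertex (s,s) is adjacent to (t,t) if and only if (s,t) is adjacent to (t,s); consequently I_1 ⊗ I_1 is isomorphic either to the 4-cycle C_4 (with the labelled vertices in the cyclic order (s,s), (s,t), (t,t), (t,s)) or to the complete graph K_4 on the four labelled vertices. -/

import Mathlib

open CategoryTheory MonoidalCategory

/-- The category of (reflexive) graphs: an object is a set of vertices with an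
irreflexive symmetric adjacency relation. -/
structure GraphCat : Type 1 where
  V : Type
  adj : V → V → Prop
  symm : ∀ {v w : V}, adj v w → adj w v
  loopless : ∀ v : V, ¬ adj v v

namespace GraphCat

/-- A graph map: whenever `v ∼ w`, either `f v = f w` or `f v ∼ f w`. -/
structure Hom (X Y : GraphCat) where
  toFun : X.V → Y.V
  map_adj : ∀ {v w : X.V}, X.adj v w → toFun v = toFun w ∨ Y.adj (toFun v) (toFun w)

theorem Hom.ext' {X Y : GraphCat} {f g : Hom X Y} (h : f.toFun = g.toFun) : f = g := by
  cases f; cases g; cases h; rfl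

instance : Category GraphCat where
  Hom := Hom
  id X := ⟨fun v => v, fun h => Or.inr h⟩
  comp f g := ⟨fun v => g.toFun (f.toFun v), fun {v w} h => by
    rcases f.map_adj h with h' | h'
    · exact Or.inl (congrArg g.toFun h')
    · exact g.map_adj h'⟩
  id_comp f := Hom.ext' rfl
  comp_id f := Hom.ext' rfl
  assoc f g h := Hom.ext' rfl

/-- The one-vertex graph `I₀`. -/
def I0 : GraphCat := ⟨PUnit, fun _ _ => False, fun h => h, fun _ h => h⟩

/-- The graph `I₁` with two vertices `s = false` and `t = true` joined by an edge. -/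
def I1 : GraphCat := ⟨Bool, fun v w => v ≠ w, Ne.symm, fun _ h => h rfl⟩

/-- The vertex inclusions `s, t : I₀ ⟶ I₁` (`s` for `false`, `t` for `true`). -/
def vert (b : Bool) : I0 ⟶ I1 := ⟨fun _ => b, fun {_ _} h => h.elim⟩

section Labels

variable [MonoidalCategory GraphCat]

/-- Given a monoidal structure on graphs with unit `I₀`, the label morphism
`(a, a') : I₀ ⟶ I₁ ⊗ I₁` for `a, a' ∈ {s, t}` (encoded as booleans, `s = false`,
`t = true`): the composite of the unit isomorphism `I₀ ≅ I₀ ⊗ I₀` with `a ⊗ a'`. -/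
def lab (hU : (𝟙_ GraphCat) = I0) (a a' : Bool) : I0 ⟶ (I1 ⊗ I1 : GraphCat) :=
  eqToHom hU.symm ≫ (λ_ (𝟙_ GraphCat)).inv ≫
    ((eqToHom hU ≫ vert a) ⊗ₘ (eqToHom hU ≫ vert a'))

/-- The vertex of `I₁ ⊗ I₁` labelled `(a, a')`, i.e. the image of the morphism
`lab hU a a'`. -/
def vlab (hU : (𝟙_ GraphCat) = I0) (a a' : Bool) : (I1 ⊗ I1 : GraphCat).V :=
  (lab hU a a').toFun PUnit.unit

end Labels

/-- The 4-cycle `C₄`, with vertex set `Bool × Bool` and edges between pairs differing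
in exactly one coordinate; its cyclic order is `(s,s), (s,t), (t,t), (t,s)`. -/
def C4 : GraphCat where
  V := Bool × Bool
  adj p q := p ≠ q ∧ (p.1 = q.1 ∨ p.2 = q.2)
  symm := by
    rintro p q ⟨hne, h⟩
    refine ⟨hne.symm, ?_⟩
    rcases h with e | e
    exacts [Or.inl e.symm, Or.inr e.symm]
  loopless := fun p h => h.1 rfl

/-- The complete graph `K₄` on the vertex set `Bool × Bool`. -/
def K4 : GraphCat where
  V := Bool × Bool
  adj p q := p ≠ q
  symm := Ne.symm
  loopless := fun p h => h rfl

end GraphCat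

/-!
Given `𝟙_ = I₀`, every pair of vertices `x, y` gives a vertex `x ⊗ y` of `X ⊗ Y`. These are
pairwise distinct, because `X ⊗ Y ⟶ X ⊗ I₀ ≅ X` and `X ⊗ Y ⟶ I₀ ⊗ Y ≅ Y` recover `x` and `y`.
They exhaust `X ⊗ Y` because the structure is closed: maps `X ⊗ Y ⟶ Z` that agree on all
`x ⊗ y` have curryings `Y ⟶ [X, Z]` that agree on every vertex, so they are equal, and a vertex
outside the image would be separated from the others by a map into a codiscrete graph.
Applying `− ⊗ I₁` and `I₁ ⊗ −` to vertex inclusions makes every pair of labels that differ in one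
coordinate adjacent, and the automorphism `flip ⊗ 𝟙` of `I₁ ⊗ I₁` exchanges the two diagonals.
-/

namespace GraphCat

theorem ne_of_adj {X : GraphCat} {v w : X.V} (h : X.adj v w) : v ≠ w :=
  fun e => X.loopless w (e ▸ h)

theorem Hom.map_adj_of_injective {X Y : GraphCat} (f : X ⟶ Y) (hf : Function.Injective f.toFun)
    {v w : X.V} (h : X.adj v w) : Y.adj (f.toFun v) (f.toFun w) :=
  (f.map_adj h).resolve_left fun e => ne_of_adj h (hf e)

@[simp]
theorem Iso.inv_toFun_hom_toFun {X Y : GraphCat} (e : X ≅ Y) (x : X.V) :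
    e.inv.toFun (e.hom.toFun x) = x :=
  congrFun (congrArg Hom.toFun e.hom_inv_id) x

theorem Iso.inv_toFun_eq_of_hom_toFun {X Y : GraphCat} (e : X ≅ Y) {x : X.V} {y : Y.V}
    (h : e.hom.toFun x = y) : e.inv.toFun y = x :=
  h ▸ Iso.inv_toFun_hom_toFun e x

theorem Iso.adj_iff {X Y : GraphCat} (e : X ≅ Y) (v w : X.V) :
    X.adj v w ↔ Y.adj (e.hom.toFun v) (e.hom.toFun w) := by
  refine ⟨e.hom.map_adj_of_injective (Function.LeftInverse.injective (Iso.inv_toFun_hom_toFun e)),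
    fun h => ?_⟩
  have := e.inv.map_adj_of_injective
    (Function.LeftInverse.injective (Iso.inv_toFun_hom_toFun e.symm)) h
  rwa [Iso.inv_toFun_hom_toFun, Iso.inv_toFun_hom_toFun] at this

def isoOfAdjIff {X Y : GraphCat} (e : X.V ≃ Y.V) (h : ∀ v w, X.adj v w ↔ Y.adj (e v) (e w)) :
    X ≅ Y where
  hom := ⟨e, fun hvw => Or.inr ((h _ _).1 hvw)⟩
  inv := ⟨e.symm, fun {v w} hvw => Or.inr ((h _ _).2 (by simpa using hvw))⟩
  hom_inv_id := Hom.ext' (funext e.symm_apply_apply)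
  inv_hom_id := Hom.ext' (funext e.apply_symm_apply)

@[simp]
theorem comp_toFun {X Y Z : GraphCat} (f : X ⟶ Y) (g : Y ⟶ Z) (v : X.V) :
    (f ≫ g).toFun v = g.toFun (f.toFun v) :=
  rfl

@[simp]
theorem id_toFun (X : GraphCat) (v : X.V) : (𝟙 X : X ⟶ X).toFun v = v :=
  rfl

def codiscrete (α : Type) : GraphCat := ⟨α, Ne, Ne.symm, fun _ h => h rfl⟩

def toCodiscrete {X : GraphCat} {α : Type} (f : X.V → α) : X ⟶ codiscrete α :=
  ⟨f, fun {v w} _ => (em (f v = f w)).imp id id⟩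

def flip : I1 ≅ I1 := isoOfAdjIff (Equiv.mk (!·) (!·) Bool.not_not Bool.not_not)
  fun _ _ => Bool.not_inj_iff.not.symm

section Monoidal

variable [MonoidalCategory GraphCat] (hU : 𝟙_ GraphCat = I0)

def unitVertex : (𝟙_ GraphCat).V := (eqToHom hU.symm).toFun PUnit.unit

theorem eq_unitVertex (v : (𝟙_ GraphCat).V) : v = unitVertex hU := by
  have : Subsingleton (𝟙_ GraphCat).V := by rw [hU]; exact inferInstanceAs (Subsingleton PUnit)
  exact Subsingleton.elim _ _

theorem unit_hom_ext {X : GraphCat} {f g : 𝟙_ GraphCat ⟶ X}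
    (h : f.toFun (unitVertex hU) = g.toFun (unitVertex hU)) : f = g :=
  Hom.ext' (funext fun v => by rwa [eq_unitVertex hU v])

def elem {X : GraphCat} (x : X.V) : 𝟙_ GraphCat ⟶ X := ⟨fun _ => x, fun _ => Or.inl rfl⟩

@[simp]
theorem elem_toFun {X : GraphCat} (x : X.V) (v : (𝟙_ GraphCat).V) : (elem x).toFun v = x :=
  rfl

theorem elem_comp {X Y : GraphCat} (x : X.V) (f : X ⟶ Y) :
    elem x ≫ f = elem (f.toFun x) :=
  Hom.ext' rfl

include hU in
theorem elem_eq_id (v : (𝟙_ GraphCat).V) : elem v = 𝟙 _ :=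
  unit_hom_ext hU (eq_unitVertex hU v)

def toUnit (X : GraphCat) : X ⟶ 𝟙_ GraphCat := ⟨fun _ => unitVertex hU, fun _ => Or.inl rfl⟩

def tensorVertex {X Y : GraphCat} (x : X.V) (y : Y.V) : (X ⊗ Y).V :=
  ((λ_ (𝟙_ GraphCat)).inv ≫ (elem x ⊗ₘ elem y)).toFun (unitVertex hU)

theorem vlab_eq_tensorVertex (a a' : Bool) :
    vlab hU a a' = tensorVertex hU (X := I1) (Y := I1) a a' :=
  rfl

theorem tensorHom_toFun_tensorVertex {X X' Y Y' : GraphCat} (f : X ⟶ X') (g : Y ⟶ Y')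
    (x : X.V) (y : Y.V) :
    (f ⊗ₘ g).toFun (tensorVertex hU x y) = tensorVertex hU (f.toFun x) (g.toFun y) := by
  simp only [tensorVertex, ← elem_comp, ← tensorHom_comp_tensorHom]
  rfl

theorem rightUnitor_hom_toFun_tensorVertex {X : GraphCat} (x : X.V) (v : (𝟙_ GraphCat).V) :
    (ρ_ X).hom.toFun (tensorVertex hU x v) = x := by
  have : (λ_ (𝟙_ GraphCat)).inv ≫ (elem x ⊗ₘ 𝟙 _) ≫ (ρ_ X).hom = elem x := by
    simp [unitors_inv_equal]
  rw [tensorVertex, elem_eq_id hU]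
  exact congrFun (congrArg Hom.toFun this) (unitVertex hU)

theorem leftUnitor_hom_toFun_tensorVertex {Y : GraphCat} (v : (𝟙_ GraphCat).V) (y : Y.V) :
    (λ_ Y).hom.toFun (tensorVertex hU v y) = y := by
  have : (λ_ (𝟙_ GraphCat)).inv ≫ (𝟙 _ ⊗ₘ elem y) ≫ (λ_ Y).hom = elem y := by
    simp
  rw [tensorVertex, elem_eq_id hU]
  exact congrFun (congrArg Hom.toFun this) (unitVertex hU)

theorem rightUnitor_inv_toFun {X : GraphCat} (x : X.V) :
    (ρ_ X).inv.toFun x = tensorVertex hU x (unitVertex hU) :=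
  Iso.inv_toFun_eq_of_hom_toFun _ (rightUnitor_hom_toFun_tensorVertex hU x _)

theorem leftUnitor_inv_toFun {Y : GraphCat} (y : Y.V) :
    (λ_ Y).inv.toFun y = tensorVertex hU (unitVertex hU) y :=
  Iso.inv_toFun_eq_of_hom_toFun _ (leftUnitor_hom_toFun_tensorVertex hU _ y)

theorem tensorVertex_injective {X Y : GraphCat} {x x' : X.V} {y y' : Y.V}
    (h : tensorVertex hU x y = tensorVertex hU x' y') : x = x' ∧ y = y' := by
  have fst := congrArg ((𝟙 X ⊗ₘ toUnit hU Y) ≫ (ρ_ X).hom).toFun h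
  have snd := congrArg ((toUnit hU X ⊗ₘ 𝟙 Y) ≫ (λ_ Y).hom).toFun h
  simp only [comp_toFun, tensorHom_toFun_tensorVertex, rightUnitor_hom_toFun_tensorVertex,
    leftUnitor_hom_toFun_tensorVertex] at fst snd
  exact ⟨fst, snd⟩

theorem adj_tensorVertex_of_adj_left {X Y : GraphCat} {x x' : X.V} (y : Y.V)
    (h : X.adj x x') : (X ⊗ Y).adj (tensorVertex hU x y) (tensorVertex hU x' y) := by
  let row := (ρ_ X).inv ≫ (𝟙 X ⊗ₘ elem y)
  have hrow : ∀ x, row.toFun x = tensorVertex hU x y := fun x => by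
    simp only [row, comp_toFun, rightUnitor_inv_toFun hU, tensorHom_toFun_tensorVertex, id_toFun,
      elem_toFun]
  have := row.map_adj h
  rw [hrow, hrow] at this
  exact this.resolve_left fun e => ne_of_adj h (tensorVertex_injective hU e).1

theorem adj_tensorVertex_of_adj_right {X Y : GraphCat} (x : X.V) {y y' : Y.V}
    (h : Y.adj y y') : (X ⊗ Y).adj (tensorVertex hU x y) (tensorVertex hU x y') := by
  let col := (λ_ Y).inv ≫ (elem x ⊗ₘ 𝟙 Y)
  have hcol : ∀ y, col.toFun y = tensorVertex hU x y := fun y => by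
    simp only [col, comp_toFun, leftUnitor_inv_toFun hU, tensorHom_toFun_tensorVertex, id_toFun,
      elem_toFun]
  have := col.map_adj h
  rw [hcol, hcol] at this
  exact this.resolve_left fun e => ne_of_adj h (tensorVertex_injective hU e).2

section Closed

variable [MonoidalClosed GraphCat]

theorem hom_ext_of_tensorVertex {X Y Z : GraphCat} {f g : X ⊗ Y ⟶ Z}
    (h : ∀ x y, f.toFun (tensorVertex hU x y) = g.toFun (tensorVertex hU x y)) : f = g := by
  apply MonoidalClosed.curry_injective
  refine Hom.ext' (funext fun y => ?_)
  have hy : X ◁ elem y ≫ f = X ◁ elem y ≫ g := by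
    rw [← cancel_epi (ρ_ X).inv]
    refine Hom.ext' (funext fun x => ?_)
    simpa [rightUnitor_inv_toFun hU, ← id_tensorHom, tensorHom_toFun_tensorVertex] using h x y
  calc (MonoidalClosed.curry f).toFun y
      = (elem y ≫ MonoidalClosed.curry f).toFun (unitVertex hU) := rfl
    _ = (elem y ≫ MonoidalClosed.curry g).toFun (unitVertex hU) := by
      rw [← MonoidalClosed.curry_natural_left, ← MonoidalClosed.curry_natural_left, hy]
    _ = (MonoidalClosed.curry g).toFun y := rfl

theorem tensorVertex_surjective {X Y : GraphCat} (z : (X ⊗ Y).V) :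
    ∃ x y, tensorVertex hU x y = z := by
  by_contra! hz
  have := hom_ext_of_tensorVertex hU (f := toCodiscrete (· = z))
    (g := toCodiscrete fun _ => False) fun x y => eq_false (hz x y)
  have hzz : (z = z) = False := congrFun (congrArg Hom.toFun this) z
  exact cast hzz rfl

noncomputable def tensorVertexEquiv (X Y : GraphCat) : X.V × Y.V ≃ (X ⊗ Y).V :=
  Equiv.ofBijective (fun p => tensorVertex hU p.1 p.2)
    ⟨fun _ _ h => Prod.ext_iff.2 (tensorVertex_injective hU h), fun z =>
      let ⟨x, y, h⟩ := tensorVertex_surjective hU z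
      ⟨(x, y), h⟩⟩

end Closed

theorem adj_vlab_diagonal_iff :
    (I1 ⊗ I1 : GraphCat).adj (vlab hU false false) (vlab hU true true) ↔
      (I1 ⊗ I1 : GraphCat).adj (vlab hU false true) (vlab hU true false) := by
  let swap := tensorIso flip (Iso.refl I1)
  have hswap (a b : Bool) : swap.hom.toFun (vlab hU a b) = vlab hU (!a) b :=
    tensorHom_toFun_tensorVertex hU _ _ _ _
  have := Iso.adj_iff swap (vlab hU false false) (vlab hU true true)
  rw [hswap, hswap] at this
  exact this.trans ⟨(I1 ⊗ I1 : GraphCat).symm, (I1 ⊗ I1 : GraphCat).symm⟩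

theorem adj_vlab_not_not_iff (a b : Bool) :
    (I1 ⊗ I1 : GraphCat).adj (vlab hU a b) (vlab hU (!a) (!b)) ↔
      (I1 ⊗ I1 : GraphCat).adj (vlab hU false false) (vlab hU true true) := by
  have adj_comm {v w} : (I1 ⊗ I1 : GraphCat).adj v w ↔ (I1 ⊗ I1 : GraphCat).adj w v :=
    ⟨(I1 ⊗ I1 : GraphCat).symm, (I1 ⊗ I1 : GraphCat).symm⟩
  have hdiag := adj_vlab_diagonal_iff hU
  cases a <;> cases b
  exacts [Iff.rfl, hdiag.symm, adj_comm.trans hdiag.symm, adj_comm]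

theorem adj_vlab_iff (p q : Bool × Bool) :
    (I1 ⊗ I1 : GraphCat).adj (vlab hU p.1 p.2) (vlab hU q.1 q.2) ↔
      p ≠ q ∧ (p.1 = q.1 ∨ p.2 = q.2 ∨
        (I1 ⊗ I1 : GraphCat).adj (vlab hU false false) (vlab hU true true)) := by
  obtain ⟨a, b⟩ := p
  obtain ⟨c, d⟩ := q
  by_cases hac : a = c <;> by_cases hbd : b = d
  · subst hac hbd
    exact iff_of_false ((I1 ⊗ I1 : GraphCat).loopless _) (by simp)
  · subst hac
    refine iff_of_true ?_ (by simp [hbd])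
    simpa only [vlab_eq_tensorVertex] using adj_tensorVertex_of_adj_right hU (X := I1) a hbd
  · subst hbd
    refine iff_of_true ?_ (by simp [hac])
    simpa only [vlab_eq_tensorVertex] using adj_tensorVertex_of_adj_left hU (Y := I1) b hac
  · obtain rfl : c = !a := by cases a <;> cases c <;> simp_all
    obtain rfl : d = !b := by cases b <;> cases d <;> simp_all
    exact (adj_vlab_not_not_iff hU a b).trans (by simp)

end Monoidal
end GraphCat

open GraphCat

theorem tensor_I1_I1_C4_or_K4_general [MonoidalCategory GraphCat]
    [MonoidalClosed GraphCat] (hU : (𝟙_ GraphCat) = I0) :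
    ((I1 ⊗ I1 : GraphCat).adj (vlab hU false false) (vlab hU true true) ↔
      (I1 ⊗ I1 : GraphCat).adj (vlab hU false true) (vlab hU true false)) ∧
    ((∃ e : (I1 ⊗ I1 : GraphCat) ≅ C4,
        ∀ a a' : Bool, e.hom.toFun (vlab hU a a') = (a, a')) ∨
     (∃ e : (I1 ⊗ I1 : GraphCat) ≅ K4,
        ∀ a a' : Bool, e.hom.toFun (vlab hU a a') = (a, a'))) := by
  refine ⟨adj_vlab_diagonal_iff hU, ?_⟩
  let e := tensorVertexEquiv hU I1 I1
  have he (a a' : Bool) : e.symm (vlab hU a a') = (a, a') := e.symm_apply_apply (a, a')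
  have hadj (v w : (I1 ⊗ I1 : GraphCat).V) : (I1 ⊗ I1 : GraphCat).adj v w ↔
      e.symm v ≠ e.symm w ∧ ((e.symm v).1 = (e.symm w).1 ∨ (e.symm v).2 = (e.symm w).2 ∨
        (I1 ⊗ I1 : GraphCat).adj (vlab hU false false) (vlab hU true true)) := by
    obtain ⟨p, rfl⟩ := e.surjective v
    obtain ⟨q, rfl⟩ := e.surjective w
    rw [e.symm_apply_apply, e.symm_apply_apply]
    exact adj_vlab_iff hU p q
  by_cases hD : (I1 ⊗ I1 : GraphCat).adj (vlab hU false false) (vlab hU true true)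
  · exact Or.inr ⟨isoOfAdjIff e.symm fun v w =>
      (hadj v w).trans (and_iff_left (Or.inr (Or.inr hD))), he⟩
  · exact Or.inl ⟨isoOfAdjIff e.symm fun v w =>
      (hadj v w).trans (and_congr_right fun _ => by rw [← or_assoc, or_iff_left hD]; rfl), he⟩

/-- Let `⊗` be the tensor product of a closed symmetric monoidal structure on the
category of (reflexive) graphs (whose unit is necessarily `I₀`), and write `(a,a')`
for the vertex of `I₁ ⊗ I₁` labelled `(a,a')` (with `s = false`, `t = true`).  Then
`(s,s)` is adjacent to `(t,t)` iff `(s,t)` is adjacent to `(t,s)`; consequently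
`I₁ ⊗ I₁` is isomorphic either to the 4-cycle `C₄` (with the labelled vertices in the
cyclic order `(s,s), (s,t), (t,t), (t,s)`) or to the complete graph `K₄` on the four
labelled vertices. -/
theorem tensor_I1_I1_C4_or_K4 [MonoidalCategory GraphCat] [SymmetricCategory GraphCat]
    [MonoidalClosed GraphCat] (hU : (𝟙_ GraphCat) = I0) :
    ((I1 ⊗ I1 : GraphCat).adj (vlab hU false false) (vlab hU true true) ↔
      (I1 ⊗ I1 : GraphCat).adj (vlab hU false true) (vlab hU true false)) ∧
    ((∃ e : (I1 ⊗ I1 : GraphCat) ≅ C4,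
        ∀ a a' : Bool, e.hom.toFun (vlab hU a a') = (a, a')) ∨
     (∃ e : (I1 ⊗ I1 : GraphCat) ≅ K4,
        ∀ a a' : Bool, e.hom.toFun (vlab hU a a') = (a, a'))) :=
  tensor_I1_I1_C4_or_K4_general hU
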